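/- Let p > q > 0 be coprime integers with p/q = [a_1, a_2, ..., a_n] (continued fraction with all a_i > 0, a_n > 1), and let p_i/q_i = [a_1, ..., a_i] be the i-th convergent. Then [a_1, a_2, ..., a_{n-1}, a_n+1, a_n-1, a_{n-1}, a_{n-2}, ..., a_2, a_1] = p^2/(pq + (-1)^n). -/

import Mathlib

/-- Continued fraction value: `cf [a₀, a₁, ..., aₙ] = a₀ + 1/(a₁ + 1/(... + 1/aₙ))`. -/
def cf : List ℤ → ℚ
  | [] => 0
  | [a] => (a : ℚ)
  | a :: l => (a : ℚ) + (cf l)⁻¹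

/-- Auxiliary for the Bredon–Wood sum: carries previous `a`, previous `b`,
and the partial sum of the `b`'s. -/
def NsumAux : ℤ → ℤ → ℤ → List ℤ → ℤ
  | _, _, s, [] => s
  | pa, pb, s, a :: l =>
      NsumAux a (if pb = pa ∧ Even s then 0 else a)
        (s + (if pb = pa ∧ Even s then 0 else a)) l

/-- `Nsum [a₀,...,aₙ] = b₀ + ... + bₙ` where `b₀ = a₀` and
`bᵢ = 0` if `bᵢ₋₁ = aᵢ₋₁` and `b₀ + ... + bᵢ₋₁` is even, else `bᵢ = aᵢ`.
The Bredon–Wood invariant is `N(x,y) = Nsum l / 2` for `l` the continued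
fraction expansion of `x/y`. -/
def Nsum : List ℤ → ℤ
  | [] => 0
  | a :: l => NsumAux a a a l

/-- A valid continued fraction expansion: nonempty, `a₀ ≥ 0`,
`aᵢ > 0` for `i ≥ 1`, and the last term `> 1`. -/
def ValidCF (l : List ℤ) : Prop :=
  l ≠ [] ∧ 0 ≤ l.headI ∧ (∀ a ∈ l.tail, 0 < a) ∧ 1 < l.getLast!

/-!
Let `M(l)` be the product of the matrices `[[a, 1], [1, 0]]` over the entries `a` of `l`. Its first
column is the pair (numerator, denominator) of `cf l` (the last convergent), this pair is coprime
because `det M(l) = ±1`, and `M(l.reverse) = M(l)ᵀ`. Splitting `[a₁, …, aₙ] = l ++ [t]` and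
putting `A = M(l)`, the new expansion has matrix `A · [[t², t + 1], [t - 1, 1]] · Aᵀ`, whose first
column is `(p², pq - det A) = (p², pq + (-1)ⁿ)` because `(p, q)` is the first column of
`A · [[t, 1], [1, 0]]`.
-/

open Matrix

def cfMatrix : List ℤ → Matrix (Fin 2) (Fin 2) ℤ
  | [] => 1
  | a :: l => !![a, 1; 1, 0] * cfMatrix l

@[simp]
lemma cfMatrix_nil : cfMatrix [] = 1 := rfl

@[simp]
lemma cfMatrix_cons (a : ℤ) (l : List ℤ) : cfMatrix (a :: l) = !![a, 1; 1, 0] * cfMatrix l :=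
  rfl

lemma cfMatrix_append (l l' : List ℤ) : cfMatrix (l ++ l') = cfMatrix l * cfMatrix l' := by
  induction l with
  | nil => simp
  | cons a l ih => simp [ih]

lemma cfMatrix_singleton (a : ℤ) : cfMatrix [a] = !![a, 1; 1, 0] := by
  simp

lemma cfMatrix_reverse (l : List ℤ) : cfMatrix l.reverse = (cfMatrix l)ᵀ := by
  induction l with
  | nil => simp
  | cons a l ih =>
    rw [List.reverse_cons, cfMatrix_append, ih, cfMatrix_singleton, cfMatrix_cons, transpose_mul]
    congr 1
    ext i j
    fin_cases i <;> fin_cases j <;> rfl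

lemma det_cfMatrix (l : List ℤ) : (cfMatrix l).det = (-1) ^ l.length := by
  induction l with
  | nil => simp
  | cons a l ih =>
    rw [cfMatrix_cons, det_mul, ih, det_fin_two_of, List.length_cons, pow_succ]
    ring

lemma cfMatrix_cons_zero_zero (a : ℤ) (l : List ℤ) :
    cfMatrix (a :: l) 0 0 = a * cfMatrix l 0 0 + cfMatrix l 1 0 := by
  simp [mul_apply, Fin.sum_univ_two]

lemma cfMatrix_cons_one_zero (a : ℤ) (l : List ℤ) : cfMatrix (a :: l) 1 0 = cfMatrix l 0 0 := by
  simp [mul_apply, Fin.sum_univ_two]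

lemma cfMatrix_pos {l : List ℤ} (hl : ∀ x ∈ l, 0 < x) :
    0 < cfMatrix l 0 0 ∧ 0 ≤ cfMatrix l 1 0 := by
  induction l with
  | nil => simp
  | cons a l ih =>
    obtain ⟨h00, h10⟩ := ih fun x hx ↦ hl x (List.mem_cons_of_mem a hx)
    have ha : 0 < a := hl a List.mem_cons_self
    rw [cfMatrix_cons_zero_zero, cfMatrix_cons_one_zero]
    exact ⟨by positivity, h00.le⟩

lemma cfMatrix_one_zero_pos {l : List ℤ} (hl : ∀ x ∈ l, 0 < x) (hne : l ≠ []) :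
    0 < cfMatrix l 1 0 := by
  obtain ⟨a, l, rfl⟩ := List.exists_cons_of_ne_nil hne
  rw [cfMatrix_cons_one_zero]
  exact (cfMatrix_pos fun x hx ↦ hl x (List.mem_cons_of_mem a hx)).1

lemma cf_cons (a : ℤ) (l : List ℤ) : cf (a :: l) = a + (cf l)⁻¹ := by
  cases l with
  | nil => simp [cf]
  | cons b l => rfl

lemma cf_eq_div_cfMatrix {l : List ℤ} (hl : ∀ x ∈ l, 0 < x) :
    cf l = (cfMatrix l 0 0 : ℚ) / cfMatrix l 1 0 := by
  induction l with
  | nil => simp [cf]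
  | cons a l ih =>
    have hl' : ∀ x ∈ l, 0 < x := fun x hx ↦ hl x (List.mem_cons_of_mem a hx)
    have h00 : (cfMatrix l 0 0 : ℚ) ≠ 0 := by exact_mod_cast (cfMatrix_pos hl').1.ne'
    rw [cf_cons, ih hl', cfMatrix_cons_zero_zero, cfMatrix_cons_one_zero, inv_div]
    push_cast
    field_simp

lemma isCoprime_cfMatrix (l : List ℤ) : IsCoprime (cfMatrix l 0 0) (cfMatrix l 1 0) := by
  have hdet := det_cfMatrix l
  rw [det_fin_two] at hdet
  have hsq : ((-1 : ℤ) ^ l.length) ^ 2 = 1 := by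
    rw [← pow_mul, mul_comm, pow_mul, neg_one_sq, one_pow]
  exact ⟨(-1) ^ l.length * cfMatrix l 1 1, -((-1) ^ l.length * cfMatrix l 0 1),
    by linear_combination (-1) ^ l.length * hdet + hsq⟩

lemma cfMatrix_eq_of_cf_eq {l : List ℤ} {p q : ℕ} (hl : ∀ x ∈ l, 0 < x) (hne : l ≠ [])
    (hq : 0 < q) (hcop : p.Coprime q) (hcf : cf l = p / q) :
    cfMatrix l 0 0 = p ∧ cfMatrix l 1 0 = q := by
  rw [cf_eq_div_cfMatrix hl] at hcf
  exact Rat.div_int_inj (cfMatrix_one_zero_pos hl hne) (by exact_mod_cast hq)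
    (Int.isCoprime_iff_gcd_eq_one.mp (isCoprime_cfMatrix l)) (by simpa using hcop)
    (by rw [hcf, Int.cast_natCast, Int.cast_natCast])

lemma cfMatrix_append_pair_append_reverse (l : List ℤ) (t : ℤ) :
    cfMatrix (l ++ [t + 1, t - 1] ++ l.reverse) 0 0 = cfMatrix (l ++ [t]) 0 0 ^ 2 ∧
    cfMatrix (l ++ [t + 1, t - 1] ++ l.reverse) 1 0 =
      cfMatrix (l ++ [t]) 0 0 * cfMatrix (l ++ [t]) 1 0 + (-1) ^ (l.length + 1) := by
  have hdet := det_cfMatrix l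
  rw [det_fin_two] at hdet
  simp only [cfMatrix_append, cfMatrix_reverse, cfMatrix_cons, cfMatrix_nil, Matrix.mul_one,
    mul_apply, transpose_apply, Fin.sum_univ_two, of_apply, cons_val', cons_val_zero, cons_val_one, empty_val', cons_val_fin_one]
  constructor
  · ring
  · linear_combination (-1) * hdet

theorem crosscap_stmt3_general (p q n : ℕ) (a : ℕ → ℤ) (hq : 0 < q)
    (hcop : Nat.Coprime p q) (hn : 1 ≤ n)
    (hpos : ∀ i, 1 ≤ i → i ≤ n → 0 < a i) (hlast : 1 < a n)
    (hcf : cf (List.ofFn fun i : Fin n => a (i+1)) = (p : ℚ) / q) :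
    cf ((List.ofFn fun i : Fin (n-1) => a (i+1)) ++ [a n + 1, a n - 1] ++
        (List.ofFn fun i : Fin (n-1) => a (i+1)).reverse)
      = (p:ℚ)^2 / ((p:ℚ) * q + (-1)^n) := by
  obtain ⟨m, rfl⟩ : ∃ m, n = m + 1 := ⟨n - 1, by omega⟩
  set l := List.ofFn fun i : Fin m => a (i + 1)
  have hl : ∀ x ∈ l, 0 < x := by
    simp only [l, List.mem_ofFn, forall_exists_index]
    rintro _ i rfl
    exact hpos _ (by omega) (by omega)
  have hsplit : (List.ofFn fun i : Fin (m + 1) => a (i + 1)) = l ++ [a (m + 1)] := by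
    rw [List.ofFn_succ', List.concat_eq_append]
    rfl
  rw [hsplit] at hcf
  have hl_last : ∀ x ∈ l ++ [a (m + 1)], 0 < x := by
    simpa [or_imp, forall_and] using ⟨hl, hpos _ (by omega) le_rfl⟩
  obtain ⟨hp, hq'⟩ := cfMatrix_eq_of_cf_eq hl_last (by simp) hq hcop hcf
  obtain ⟨h00, h10⟩ := cfMatrix_append_pair_append_reverse l (a (m + 1))
  have hbig : ∀ x ∈ l ++ [a (m + 1) + 1, a (m + 1) - 1] ++ l.reverse, 0 < x := by
    simp only [List.mem_append, List.mem_reverse, List.mem_cons, List.not_mem_nil, or_false]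
    rintro x ((hx | rfl | rfl) | hx)
    exacts [hl x hx, by omega, by omega, hl x hx]
  rw [Nat.add_sub_cancel, cf_eq_div_cfMatrix hbig, h00, h10, hp, hq', List.length_ofFn]
  push_cast
  rfl

theorem crosscap_stmt3 (p q n : ℕ) (a : ℕ → ℤ) (hq : 0 < q) (hqp : q < p)
    (hcop : Nat.Coprime p q) (hn : 1 ≤ n)
    (hpos : ∀ i, 1 ≤ i → i ≤ n → 0 < a i) (hlast : 1 < a n)
    (hcf : cf (List.ofFn fun i : Fin n => a (i+1)) = (p : ℚ) / q) :
    cf ((List.ofFn fun i : Fin (n-1) => a (i+1)) ++ [a n + 1, a n - 1] ++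
        (List.ofFn fun i : Fin (n-1) => a (i+1)).reverse)
      = (p:ℚ)^2 / ((p:ℚ) * q + (-1)^n) :=
  crosscap_stmt3_general p q n a hq hcop hn hpos hlast hcf
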